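/- arXiv:2105.04852 — 2 statements merged into one kernel-verified Lean document; each statement's English description precedes it below -/
import Mathlib

section
/- Let 1 ≤ p < ∞ and q ≥ 0. There exists a constant c > 0, depending only on p and q, such that for all L, M > 0 and every integer n ≥ 1, the minimax risk over P^q_{L,M} is bounded below as follows: for every measurable estimator μ̂_n mapping n-tuples of Radon measures on Ω to Radon measures on Ω, sup_{P ∈ P^q_{L,M}} E[OT_p(μ̂_n(μ₁,…,μ_n), E(P))^p] ≥ c·M·L^{p−q}·n^{−1/2}, where μ₁,…,μ_n is an i.i.d. sample of law P and the expectation (taken as an upper Lebesgue integral over the sample) is with respect to P^{⊗n}. -/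
open MeasureTheory ENNReal Set

noncomputable section

abbrev E2 := EuclideanSpace ℝ (Fin 2)

/-- The open half-plane `Ω` above the diagonal. -/
def Omega : Set E2 := {x | x 0 < x 1}

/-- The diagonal `∂Ω`. -/
def diagSet : Set E2 := {x | x 0 = x 1}

/-- `Ω̄ = Ω ∪ ∂Ω`. -/
def OmegaBar : Set E2 := Omega ∪ diagSet

/-- Euclidean distance of a point to the diagonal. -/
def dDiag (x : E2) : ℝ := Metric.infDist x diagSet

/-- Total persistence `Pers_p(μ) = ∫_Ω ‖x-∂Ω‖^p dμ(x)`. -/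
def Pers (p : ℝ) (μ : Measure E2) : ℝ≥0∞ :=
  ∫⁻ x in Omega, ENNReal.ofReal (dDiag x ^ p) ∂μ

/-- Admissible partial transport plans: measures on `Ω̄ × Ω̄` whose first (resp. second)
marginal coincides with `μ` (resp. `ν`) on `Ω`. -/
def Adm (μ ν : Measure E2) : Set (Measure (E2 × E2)) :=
  {π | (π.map Prod.fst).restrict Omega = μ.restrict Omega ∧
       (π.map Prod.snd).restrict Omega = ν.restrict Omega ∧
       π ((OmegaBar ×ˢ OmegaBar)ᶜ) = 0}

/-- `OT_p(μ,ν)^p`, the optimal partial transport cost. -/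
def OTpow (p : ℝ) (μ ν : Measure E2) : ℝ≥0∞ :=
  ⨅ π ∈ Adm μ ν, ∫⁻ z, ENNReal.ofReal (dist z.1 z.2 ^ p) ∂π

/-- The distance `OT_p(μ,ν)`. -/
def OTp (p : ℝ) (μ ν : Measure E2) : ℝ≥0∞ := (OTpow p μ ν) ^ (1/p)

/-- The closed ℓ¹-ball `A_L` of radius `L/√2` centered at `(-L/√8, L/√8)`. -/
def ballA (L : ℝ) : Set E2 :=
  {x | |x 0 + L / Real.sqrt 8| + |x 1 - L / Real.sqrt 8| ≤ L / Real.sqrt 2}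

/-- Membership in `M^q_{L,M}`: supported in `Ω`, in `A_L`, with `Pers_q ≤ M`. -/
def MemMq (q L M : ℝ) (μ : Measure E2) : Prop :=
  μ Omegaᶜ = 0 ∧ μ (ballA L)ᶜ = 0 ∧ Pers q μ ≤ ENNReal.ofReal M

/-- Empirical EPD `μ̄_n = (1/n)(μ₁ + ⋯ + μ_n)` of a sample of `n` persistence measures. -/
def empEPD (n : ℕ) (ω : Fin n → Measure E2) : Measure E2 :=
  (n : ℝ≥0∞)⁻¹ • ∑ i : Fin n, ω i

/-- Distance from `x` to the `j`-th centroid, the last index standing for the diagonal. -/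
def cdistC (k : ℕ) (c : Fin k → E2) (j : Fin (k+1)) (x : E2) : ℝ :=
  if h : (j : ℕ) < k then dist x (c ⟨j, h⟩) else dDiag x

/-- Voronoi cells `V_j(c)` (the last cell being the diagonal cell `V_{k+1}`). -/
def Vcell (k : ℕ) (c : Fin k → E2) (j : Fin (k+1)) : Set E2 :=
  {x ∈ Omega | (∀ j' : Fin (k+1), j' < j → cdistC k c j x ≤ cdistC k c j' x) ∧
               (∀ j' : Fin (k+1), j < j' → cdistC k c j x < cdistC k c j' x)}

/-- The distortion `R_{k,p}(c)`. -/
def distortion (p : ℝ) (μ : Measure E2) (k : ℕ) (c : Fin k → E2) : ℝ≥0∞ :=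
  (∑ j : Fin (k+1), ∫⁻ x in Vcell k c j, ENNReal.ofReal (cdistC k c j x ^ p) ∂μ) ^ (1/p)

/-- The optimal distortion `R_k^* = inf {R_{k,p}(c) : c ∈ Ω̄^k}`. -/
def Rstar (p : ℝ) (μ : Measure E2) (k : ℕ) : ℝ≥0∞ :=
  ⨅ (c : Fin k → E2) (_ : ∀ j, c j ∈ OmegaBar), distortion p μ k c

/-- The set `C_k` of optimal codebooks. -/
def Copt (p : ℝ) (μ : Measure E2) (k : ℕ) : Set (Fin k → E2) :=
  {c | (∀ j, c j ∈ OmegaBar) ∧ distortion p μ k c = Rstar p μ k}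

/-- Support of a measure. -/
def msupport (μ : Measure E2) : Set E2 :=
  {x | ∀ U : Set E2, IsOpen U → x ∈ U → 0 < μ U}

/-- Euclidean distance between codebooks seen as vectors of `ℝ^{2k}`. -/
def cbDist (k : ℕ) (c c' : Fin k → E2) : ℝ :=
  Real.sqrt (∑ j : Fin k, dist (c j) (c' j) ^ 2)

/-- Euclidean norm on `(ℝ²)^k`. -/
def pnorm2 (k : ℕ) (v : Fin k → E2) : ℝ := Real.sqrt (∑ j : Fin k, ‖v j‖ ^ 2)

/-- Distance between the `j`-th and `j'`-th centroids, the last index standing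
for the diagonal. -/
def cdistPt (k : ℕ) (c : Fin k → E2) (j j' : Fin (k+1)) : ℝ :=
  if h : (j : ℕ) < k then
    (if h' : (j' : ℕ) < k then dist (c ⟨j, h⟩) (c ⟨j', h'⟩) else dDiag (c ⟨j, h⟩))
  else (if h' : (j' : ℕ) < k then dDiag (c ⟨j', h'⟩) else 0)

/-- The set `N(c)` of points lying on a boundary between two Voronoi cells. -/
def Nset (k : ℕ) (c : Fin k → E2) : Set E2 :=
  {x ∈ Omega | ∃ j j' : Fin (k+1), j < j' ∧ x ∈ Vcell k c j ∧ cdistC k c j x = cdistC k c j' x}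

/-- The `t`-neighborhood `A^t` of `A` in `Ω`. -/
def tN (A : Set E2) (t : ℝ) : Set E2 := {x ∈ Omega | ∃ a ∈ A, dist x a ≤ t}

/-- `w₂(c, m)_j = ∫_{V_j(c)} x dm(x)`. -/
def w2 (k : ℕ) (c : Fin k → E2) (m : Measure E2) (j : Fin k) : E2 :=
  ∫ x in Vcell k c j.castSucc, x ∂m

/-- Absolute difference in `ℝ≥0∞`. -/
def eabs (a b : ℝ≥0∞) : ℝ≥0∞ := (a - b) + (b - a)


/-!
Le Cam's two-point method. Let `x` be the centre of `A_L`, at distance `L/2` from the diagonal,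
and `m = a δ_x` with `a = M / (L/2)^q`, so that `Pers_q(m) = M`. The law
`P_θ = θ δ_m + (1 - θ) δ_0` has `E(P_θ) = θ a δ_x`. Mass near `x` can only be matched with
`θ a δ_x` by moving it to `x` or to the diagonal, so any `ν` is at `OT_p^p`-distance at least
`(L/4)^p |ν(B(x, L/4)) - θ a|` from `E(P_θ)`. For `ε = 1/(4√n)` the `n`-fold products of
`P_{1/2}` and `P_{1/2+ε}` overlap in total mass at least `7/16`, so under one of the two laws
every estimator misjudges the mass of `B(x, L/4)` by `ε a / 2` with probability bounded below,
which costs `≍ (L/4)^p ε a ≍ M L^(p-q) n^(-1/2)`.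
-/

def centerA (L : ℝ) : E2 := WithLp.toLp 2 ![-(L / Real.sqrt 8), L / Real.sqrt 8]

@[simp] lemma centerA_apply_zero (L : ℝ) : centerA L 0 = -(L / Real.sqrt 8) := rfl

@[simp] lemma centerA_apply_one (L : ℝ) : centerA L 1 = L / Real.sqrt 8 := rfl

lemma measurableSet_Omega : MeasurableSet Omega :=
  measurableSet_lt (by fun_prop) (by fun_prop)

lemma measurableSet_ballA (L : ℝ) : MeasurableSet (ballA L) :=
  measurableSet_le (by fun_prop) measurable_const

lemma continuous_dDiag : Continuous dDiag := Metric.continuous_infDist_pt _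

lemma centerA_mem_Omega {L : ℝ} (hL : 0 < L) : centerA L ∈ Omega := by
  have : 0 < L / Real.sqrt 8 := by positivity
  simp only [Omega, Set.mem_ofPred_eq, centerA_apply_zero, centerA_apply_one]
  linarith

lemma centerA_mem_ballA {L : ℝ} (hL : 0 ≤ L) : centerA L ∈ ballA L := by
  simp only [ballA, Set.mem_ofPred_eq, centerA_apply_zero, centerA_apply_one, neg_add_cancel,
    sub_self, abs_zero, add_zero]
  positivity

lemma half_le_dist_centerA {L : ℝ} (hL : 0 ≤ L) {y : E2} (hy : y 1 ≤ y 0) :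
    L / 2 ≤ dist (centerA L) y := by
  have h8 : Real.sqrt 8 ^ 2 = 8 := Real.sq_sqrt (by norm_num)
  set u := -(L / Real.sqrt 8) - y 0
  set v := L / Real.sqrt 8 - y 1
  -- `v - u = 2L/√8 + (y 0 - y 1) ≥ 2L/√8` and `u² + v² ≥ (v - u)² / 2 ≥ L²/4`
  have huv : 2 * L / Real.sqrt 8 ≤ v - u := by
    have : v - u = 2 * L / Real.sqrt 8 + (y 0 - y 1) := by ring
    linarith
  have hsq : (2 * L / Real.sqrt 8) ^ 2 = L ^ 2 / 2 := by rw [div_pow, h8]; ring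
  have key : (L / 2) ^ 2 ≤ u ^ 2 + v ^ 2 := by
    nlinarith [sq_nonneg (u + v), pow_le_pow_left₀ (by positivity) huv 2]
  rw [EuclideanSpace.dist_eq, Fin.sum_univ_two, centerA_apply_zero, centerA_apply_one,
    Real.dist_eq, Real.dist_eq, sq_abs, sq_abs]
  exact Real.le_sqrt_of_sq_le key

lemma dDiag_centerA {L : ℝ} (hL : 0 ≤ L) : dDiag (centerA L) = L / 2 := by
  have h8 : Real.sqrt 8 ^ 2 = 8 := Real.sq_sqrt (by norm_num)
  have h0 : (0 : E2) ∈ diagSet := by simp [diagSet]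
  refine le_antisymm ?_ ?_
  · refine (Metric.infDist_le_dist_of_mem h0).trans_eq ?_
    rw [EuclideanSpace.dist_eq, Fin.sum_univ_two, centerA_apply_zero, centerA_apply_one]
    simp only [PiLp.zero_apply, Real.dist_eq, sub_zero, sq_abs, neg_sq, div_pow, h8]
    rw [show (L ^ 2 / 8 + L ^ 2 / 8) = (L / 2) ^ 2 by ring, Real.sqrt_sq (by positivity)]
  · exact (Metric.le_infDist ⟨0, h0⟩).2 fun y hy => half_le_dist_centerA hL (le_of_eq hy.symm)

lemma ball_centerA_subset_Omega {L : ℝ} (hL : 0 ≤ L) :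
    Metric.ball (centerA L) (L / 4) ⊆ Omega := fun y hy => by
  by_contra hyΩ
  have := half_le_dist_centerA hL (not_lt.1 hyΩ)
  rw [Metric.mem_ball, dist_comm] at hy
  linarith

lemma quarter_le_dist_of_mem_ball_centerA {L : ℝ} (hL : 0 ≤ L) :
    ∀ z ∈ Metric.ball (centerA L) (L / 4), ∀ w ∈ OmegaBar \ Omega, L / 4 ≤ dist z w := by
  intro z hz w hw
  have hw10 : w 1 ≤ w 0 := by
    rcases hw with ⟨h | h, hwΩ⟩
    · exact absurd h hwΩ
    · exact le_of_eq h.symm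
  have := half_le_dist_centerA hL hw10
  have := dist_triangle (centerA L) z w
  rw [Metric.mem_ball, dist_comm] at hz
  linarith

lemma ofReal_rpow_mul_le_lintegral_cost {p r : ℝ} (hp : 0 ≤ p) (hr : 0 ≤ r)
    (π : Measure (E2 × E2)) {S : Set (E2 × E2)} (hS : ∀ z ∈ S, r ≤ dist z.1 z.2) :
    ENNReal.ofReal (r ^ p) * π S ≤ ∫⁻ z, ENNReal.ofReal (dist z.1 z.2 ^ p) ∂π :=
  calc ENNReal.ofReal (r ^ p) * π S = ∫⁻ _ in S, ENNReal.ofReal (r ^ p) ∂π :=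
        (setLIntegral_const _ _).symm
    _ ≤ ∫⁻ z in S, ENNReal.ofReal (dist z.1 z.2 ^ p) ∂π :=
        setLIntegral_mono (by fun_prop) fun z hz =>
          ENNReal.ofReal_le_ofReal (Real.rpow_le_rpow hr (hS z hz) hp)
    _ ≤ _ := setLIntegral_le_lintegral _ _

section Marginals

variable {μ ν : Measure E2} {π : Measure (E2 × E2)} {B : Set E2}

lemma measure_prod_univ_of_mem_Adm (hπ : π ∈ Adm μ ν) (hB : MeasurableSet B) (hBΩ : B ⊆ Omega) :
    π (B ×ˢ univ) = μ B := by
  have h := congrArg (fun m : Measure E2 => m B) hπ.1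
  simp only [Measure.restrict_apply hB, inter_eq_self_of_subset_left hBΩ,
    Measure.map_apply measurable_fst hB] at h
  rwa [prod_univ]

lemma measure_univ_prod_of_mem_Adm (hπ : π ∈ Adm μ ν) (hB : MeasurableSet B) (hBΩ : B ⊆ Omega) :
    π (univ ×ˢ B) = ν B := by
  have h := congrArg (fun m : Measure E2 => m B) hπ.2.1
  simp only [Measure.restrict_apply hB, inter_eq_self_of_subset_left hBΩ,
    Measure.map_apply measurable_snd hB] at h
  rwa [univ_prod]

end Marginals

section AtomTransport

variable {p r : ℝ} {x : E2} (ν : Measure E2) (α : ℝ≥0∞)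

lemma measure_univ_prod_singleton_of_mem_Adm {π : Measure (E2 × E2)}
    (hπ : π ∈ Adm ν (α • Measure.dirac x)) (hx : x ∈ Omega) :
    π (univ ×ˢ {x}) = α := by
  rw [measure_univ_prod_of_mem_Adm hπ (measurableSet_singleton x) (singleton_subset_iff.2 hx)]
  simp [Measure.dirac_apply' x (measurableSet_singleton x)]

/-- Mass of `α δ_x` missing from `ν` near `x` travels at least `r`. -/
lemma ofReal_rpow_mul_deficit_le_OTpow (hp : 0 ≤ p) (hr : 0 < r)
    (hball : Metric.ball x r ⊆ Omega) :
    ENNReal.ofReal (r ^ p) * (α - ν (Metric.ball x r)) ≤ OTpow p ν (α • Measure.dirac x) := by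
  refine le_iInf₂ fun π hπ => ?_
  set B := Metric.ball x r
  have hx : x ∈ Omega := hball (Metric.mem_ball_self hr)
  have key : α - ν B ≤ π (Bᶜ ×ˢ {x}) := by
    rw [tsub_le_iff_right, ← measure_univ_prod_singleton_of_mem_Adm ν α hπ hx,
      ← measure_prod_univ_of_mem_Adm hπ Metric.isOpen_ball.measurableSet hball]
    calc π (univ ×ˢ {x}) ≤ π (Bᶜ ×ˢ {x} ∪ B ×ˢ univ) := measure_mono fun z hz => by
          by_cases h : z.1 ∈ B
          · exact Or.inr ⟨h, trivial⟩
          · exact Or.inl ⟨h, hz.2⟩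
      _ ≤ _ := measure_union_le _ _
  refine (mul_le_mul_right key _).trans
    (ofReal_rpow_mul_le_lintegral_cost hp hr.le π fun z ⟨hz1, hz2⟩ => ?_)
  rw [mem_singleton_iff.1 hz2]
  simpa [B] using hz1

/-- Mass of `ν` near `x` in excess of `α` must be sent to the diagonal, at distance `≥ r`. -/
lemma ofReal_rpow_mul_excess_le_OTpow (hp : 0 ≤ p) (hr : 0 < r)
    (hball : Metric.ball x r ⊆ Omega)
    (hfar : ∀ z ∈ Metric.ball x r, ∀ w ∈ OmegaBar \ Omega, r ≤ dist z w) :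
    ENNReal.ofReal (r ^ p) * (ν (Metric.ball x r) - α) ≤ OTpow p ν (α • Measure.dirac x) := by
  refine le_iInf₂ fun π hπ => ?_
  set B := Metric.ball x r
  have hx : x ∈ Omega := hball (Metric.mem_ball_self hr)
  have hΩx : MeasurableSet (Omega \ {x}) := measurableSet_Omega.diff (measurableSet_singleton x)
  have hrest : π (univ ×ˢ (Omega \ {x})) = 0 := by
    rw [measure_univ_prod_of_mem_Adm hπ hΩx sdiff_subset]
    simp [Measure.dirac_apply' x hΩx]
  have key : ν B - α ≤ π (B ×ˢ (OmegaBar \ Omega)) := by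
    rw [tsub_le_iff_right, ← measure_univ_prod_singleton_of_mem_Adm ν α hπ hx,
      ← measure_prod_univ_of_mem_Adm hπ Metric.isOpen_ball.measurableSet hball]
    -- the second coordinate lies in `Ω̄ \ Ω`, at `x`, in `Ω \ {x}`, or outside `Ω̄` (a null set)
    calc π (B ×ˢ univ)
        ≤ π (B ×ˢ (OmegaBar \ Omega) ∪ univ ×ˢ {x} ∪ univ ×ˢ (Omega \ {x})
            ∪ (OmegaBar ×ˢ OmegaBar)ᶜ) := measure_mono fun z hz => by
          by_cases hzx : z.2 = x
          · exact Or.inl (Or.inl (Or.inr ⟨trivial, hzx⟩))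
          by_cases hzo : z.2 ∈ Omega
          · exact Or.inl (Or.inr ⟨trivial, hzo, hzx⟩)
          by_cases hzb : z.2 ∈ OmegaBar
          · exact Or.inl (Or.inl (Or.inl ⟨hz.1, hzb, hzo⟩))
          · exact Or.inr fun hc => hzb hc.2
      _ ≤ π (B ×ˢ (OmegaBar \ Omega)) + π (univ ×ˢ {x}) + π (univ ×ˢ (Omega \ {x}))
            + π (OmegaBar ×ˢ OmegaBar)ᶜ :=
          (measure_union_le _ _).trans <| by
            gcongr
            exact (measure_union_le _ _).trans (by gcongr; exact measure_union_le _ _)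
      _ = _ := by rw [hrest, hπ.2.2, add_zero, add_zero]
  exact (mul_le_mul_right key _).trans
    (ofReal_rpow_mul_le_lintegral_cost hp hr.le π fun z hz => hfar z.1 hz.1 z.2 hz.2)

end AtomTransport

section TwoPointLaw

variable {α : Type*} [MeasurableSpace α]

def twoPointLaw (m : Measure α) (θ : ℝ) : Measure (Measure α) :=
  ENNReal.ofReal θ • Measure.dirac m + ENNReal.ofReal (1 - θ) • Measure.dirac 0

variable (m : Measure α) {θ : ℝ}

instance : IsFiniteMeasure (twoPointLaw m θ) :=
  ⟨by simp [twoPointLaw, ENNReal.add_lt_top]⟩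

lemma isProbabilityMeasure_twoPointLaw (h0 : 0 ≤ θ) (h1 : θ ≤ 1) :
    IsProbabilityMeasure (twoPointLaw m θ) := ⟨by
  simp only [twoPointLaw, Measure.add_apply, Measure.smul_apply, measure_univ, smul_eq_mul,
    mul_one]
  rw [← ENNReal.ofReal_add h0 (by linarith)]
  norm_num⟩

lemma join_twoPointLaw : (twoPointLaw m θ).join = ENNReal.ofReal θ • m := by
  ext s hs
  rw [Measure.join_apply hs, twoPointLaw, lintegral_add_measure, lintegral_smul_measure,
    lintegral_smul_measure, lintegral_dirac' _ (Measure.measurable_coe hs),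
    lintegral_dirac' _ (Measure.measurable_coe hs)]
  simp

lemma measurableSet_singleton_zero_measure : MeasurableSet {(0 : Measure α)} := by
  have : {(0 : Measure α)} = (fun μ : Measure α => μ univ) ⁻¹' {0} := by
    ext μ; simp
  rw [this]
  exact Measure.measurable_coe MeasurableSet.univ (measurableSet_singleton 0)

/-- `c • δ_x` is the only measure giving mass `c` to `{x}` and `0` to its complement. -/
lemma measurableSet_singleton_smul_dirac [MeasurableSingletonClass α] (x : α) (c : ℝ≥0∞) :
    MeasurableSet {c • Measure.dirac x} := by
  have hx := measurableSet_singleton x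
  have : {c • Measure.dirac x} = (fun μ : Measure α => μ {x}) ⁻¹' {c} ∩
      (fun μ : Measure α => μ {x}ᶜ) ⁻¹' {0} := by
    ext μ
    simp only [mem_singleton_iff, mem_inter_iff, mem_preimage]
    refine ⟨by rintro rfl; simp, fun ⟨h1, h2⟩ => ?_⟩
    ext s hs
    rw [← measure_inter_add_sdiff s hx, measure_mono_null (sdiff_subset_compl s {x}) h2,
      Measure.smul_apply, Measure.dirac_apply' x hs]
    by_cases hxs : x ∈ s
    · simp [inter_eq_right.2 (singleton_subset_iff.2 hxs), h1, hxs]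
    · simp [inter_singleton_eq_empty.2 hxs, hxs]
  rw [this]
  exact (Measure.measurable_coe hx (measurableSet_singleton c)).inter
    (Measure.measurable_coe hx.compl (measurableSet_singleton 0))

variable {m}

lemma ae_twoPointLaw {P : Measure α → Prop} (hm : MeasurableSet {m}) (hPm : P m) (hP0 : P 0) :
    ∀ᵐ μ ∂twoPointLaw m θ, P μ := by
  have hS := (hm.union measurableSet_singleton_zero_measure).compl
  refine measure_mono_null (t := ({m} ∪ {0})ᶜ) (fun μ hμ hmem => ?_) ?_
  · rcases hmem with rfl | rfl
    exacts [hμ hPm, hμ hP0]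
  · rw [twoPointLaw, Measure.add_apply, Measure.smul_apply, Measure.smul_apply,
      Measure.dirac_apply' _ hS, Measure.dirac_apply' _ hS]
    simp

lemma twoPointLaw_singleton_self (hm : MeasurableSet {m}) (hm0 : m ≠ 0) :
    twoPointLaw m θ {m} = ENNReal.ofReal θ := by
  simp [twoPointLaw, Measure.dirac_apply' _ hm, Ne.symm hm0]

lemma twoPointLaw_singleton_zero (hm0 : m ≠ 0) :
    twoPointLaw m θ {0} = ENNReal.ofReal (1 - θ) := by
  simp [twoPointLaw, Measure.dirac_apply' _ measurableSet_singleton_zero_measure, hm0]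

end TwoPointLaw

/-- The atoms of `Measure.pi fun _ : Fin n => twoPointLaw m θ`. -/
def bitSample {α : Type*} [MeasurableSpace α] (m : Measure α) {n : ℕ} (b : Fin n → Bool) :
    Fin n → Measure α :=
  fun i => if b i then m else 0

def bernoulliMass {n : ℕ} (θ : ℝ) (b : Fin n → Bool) : ℝ :=
  ∏ i, if b i then θ else 1 - θ

section Sample

variable {α : Type*} [MeasurableSpace α] {m : Measure α} {n : ℕ}

lemma bitSample_injective (hm0 : m ≠ 0) : Function.Injective (bitSample m (n := n)) := by
  intro b b' h
  funext i
  have h := congrFun h i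
  unfold bitSample at h
  cases hb : b i <;> cases hb' : b' i <;> simp only [hb, hb', Bool.false_eq_true] at h ⊢
  exacts [(hm0 h.symm).elim, (hm0 h).elim]

lemma measurableSet_singleton_bitSample (hm : MeasurableSet {m}) (b : Fin n → Bool) :
    MeasurableSet {bitSample m b} := by
  rw [← univ_pi_singleton]
  refine MeasurableSet.univ_pi fun i => ?_
  unfold bitSample
  split
  exacts [hm, measurableSet_singleton_zero_measure]

lemma pi_twoPointLaw_singleton_bitSample {θ : ℝ} (h0 : 0 ≤ θ) (h1 : θ ≤ 1)
    (hm : MeasurableSet {m}) (hm0 : m ≠ 0) (b : Fin n → Bool) :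
    Measure.pi (fun _ : Fin n => twoPointLaw m θ) {bitSample m b} =
      ENNReal.ofReal (bernoulliMass θ b) := by
  rw [← univ_pi_singleton, Measure.pi_pi, bernoulliMass,
    ENNReal.ofReal_prod_of_nonneg fun i _ => by split <;> linarith]
  refine Finset.prod_congr rfl fun i _ => ?_
  unfold bitSample
  split
  exacts [twoPointLaw_singleton_self hm hm0, twoPointLaw_singleton_zero hm0]

end Sample

lemma sum_measure_singleton_le {X S : Type*} [MeasurableSpace X] {t : S → X}
    (ht : Function.Injective t) (hmeas : ∀ b, MeasurableSet {t b}) (μ : Measure X)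
    {A : Set X} {s : Finset S} (hs : ∀ b ∈ s, t b ∈ A) :
    ∑ b ∈ s, μ {t b} ≤ μ A := by
  rw [← measure_biUnion_finset (fun b _ b' _ hbb' => disjoint_singleton.2 (ht.ne hbb'))
    fun b _ => hmeas b]
  exact measure_mono (iUnion₂_subset fun b hb => singleton_subset_iff.2 (hs b hb))

lemma sum_min_le_measure_add_measure_compl {X S : Type*} [MeasurableSpace X] [Fintype S]
    {t : S → X} (ht : Function.Injective t) (hmeas : ∀ b, MeasurableSet {t b})
    (μ ν : Measure X) (A : Set X) :
    ∑ b, min (μ {t b}) (ν {t b}) ≤ μ A + ν Aᶜ := by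
  classical
  rw [← Finset.sum_filter_add_sum_filter_not Finset.univ (fun b => t b ∈ A)]
  gcongr
  · exact (Finset.sum_le_sum fun b _ => min_le_left _ _).trans
      (sum_measure_singleton_le ht hmeas μ fun b hb => (Finset.mem_filter.1 hb).2)
  · exact (Finset.sum_le_sum fun b _ => min_le_right _ _).trans
      (sum_measure_singleton_le ht hmeas ν fun b hb => (Finset.mem_filter.1 hb).2)

lemma sq_sum_le_sum_min_mul_sum_add_sum {ι : Type*} (s : Finset ι) {f g h : ι → ℝ}
    (hf : ∀ i ∈ s, 0 ≤ f i) (hg : ∀ i ∈ s, 0 ≤ g i) (hh : ∀ i ∈ s, h i ^ 2 ≤ f i * g i) :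
    (∑ i ∈ s, h i) ^ 2 ≤ (∑ i ∈ s, min (f i) (g i)) * (∑ i ∈ s, f i + ∑ i ∈ s, g i) := by
  have hmin : ∀ i ∈ s, 0 ≤ min (f i) (g i) := fun i hi => le_min (hf i hi) (hg i hi)
  calc (∑ i ∈ s, h i) ^ 2 ≤ (∑ i ∈ s, min (f i) (g i)) * ∑ i ∈ s, max (f i) (g i) :=
        Finset.sum_sq_le_sum_mul_sum_of_sq_le_mul s hmin
          (fun i hi => (hf i hi).trans (le_max_left _ _))
          fun i hi => (hh i hi).trans_eq (min_mul_max _ _).symm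
    _ ≤ _ := by
        rw [← Finset.sum_add_distrib]
        exact mul_le_mul_of_nonneg_left (Finset.sum_le_sum fun i hi =>
          max_le_add_of_nonneg (hf i hi) (hg i hi)) (Finset.sum_nonneg hmin)

lemma sum_bernoulliMass (n : ℕ) (θ : ℝ) : ∑ b : Fin n → Bool, bernoulliMass θ b = 1 := by
  unfold bernoulliMass
  rw [← Fintype.sum_pow (fun v : Bool => if v then θ else 1 - θ), Fintype.sum_bool]
  simp

lemma bernoulliMass_nonneg {n : ℕ} {θ : ℝ} (h0 : 0 ≤ θ) (h1 : θ ≤ 1) (b : Fin n → Bool) :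
    0 ≤ bernoulliMass θ b :=
  Finset.prod_nonneg fun i _ => by split <;> linarith

lemma seven_sixteenths_le_sum_min_bernoulliMass {n : ℕ} {ε : ℝ} (hε0 : 0 ≤ ε) (hε : ε ≤ 1 / 4)
    (hn : n * ε ^ 2 ≤ 1 / 16) :
    7 / 16 ≤ ∑ b : Fin n → Bool, min (bernoulliMass (1 / 2) b) (bernoulliMass (1 / 2 + ε) b) := by
  -- `s v` is a polynomial lower bound for the Bhattacharyya term `√(P_{1/2}{v} P_{1/2+ε}{v})`,
  -- with `s true + s false = 1 - ε²`
  set s : Bool → ℝ := fun v => if v then 1 / 2 + ε / 2 - ε ^ 2 / 2 else 1 / 2 - ε / 2 - ε ^ 2 / 2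
  have hs : ∀ v, s v ^ 2 ≤
      (if v then 1 / 2 else 1 - 1 / 2) * (if v then 1 / 2 + ε else 1 - (1 / 2 + ε)) := by
    intro v
    cases v <;> simp only [s, if_true, Bool.false_eq_true, if_false]
    · nlinarith [mul_nonneg (sq_nonneg ε) (by nlinarith : 0 ≤ 1 / 4 - ε / 2 - ε ^ 2 / 4)]
    · nlinarith [mul_nonneg (sq_nonneg ε) (by nlinarith : 0 ≤ 1 / 4 + ε / 2 - ε ^ 2 / 4)]
  have hsum : ∑ b : Fin n → Bool, ∏ i, s (b i) = (1 - ε ^ 2) ^ n := by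
    rw [← Fintype.sum_pow, Fintype.sum_bool]
    simp only [s, if_true, Bool.false_eq_true, if_false]
    ring_nf
  have hCS := sq_sum_le_sum_min_mul_sum_add_sum (Finset.univ : Finset (Fin n → Bool))
    (fun b _ => bernoulliMass_nonneg (θ := 1 / 2) (by norm_num) (by norm_num) b)
    (fun b _ => bernoulliMass_nonneg (θ := 1 / 2 + ε) (by linarith) (by linarith) b)
    (h := fun b => ∏ i, s (b i)) fun b _ => by
      rw [← Finset.prod_pow]
      unfold bernoulliMass
      rw [← Finset.prod_mul_distrib]
      exact Finset.prod_le_prod (fun i _ => sq_nonneg _) fun i _ => hs (b i)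
  rw [hsum, sum_bernoulliMass, sum_bernoulliMass, ← pow_mul] at hCS
  have hBernoulli := one_add_mul_le_pow (a := -ε ^ 2) (by nlinarith) (n * 2)
  rw [← sub_eq_add_neg] at hBernoulli
  push_cast at hBernoulli
  linarith

lemma ofReal_seven_sixteenths_le_pi_twoPointLaw_add_compl {α : Type*} [MeasurableSpace α]
    {m : Measure α} (hm : MeasurableSet {m}) (hm0 : m ≠ 0) {n : ℕ} {ε : ℝ} (hε0 : 0 ≤ ε)
    (hε : ε ≤ 1 / 4) (hn : n * ε ^ 2 ≤ 1 / 16) (A : Set (Fin n → Measure α)) :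
    ENNReal.ofReal (7 / 16) ≤ Measure.pi (fun _ : Fin n => twoPointLaw m (1 / 2)) A +
      Measure.pi (fun _ : Fin n => twoPointLaw m (1 / 2 + ε)) Aᶜ := by
  refine le_trans ?_ (sum_min_le_measure_add_measure_compl (bitSample_injective hm0)
    (measurableSet_singleton_bitSample hm) _ _ A)
  simp only [pi_twoPointLaw_singleton_bitSample (θ := 1 / 2) (by norm_num) (by norm_num) hm hm0,
    pi_twoPointLaw_singleton_bitSample (θ := 1 / 2 + ε) (by linarith) (by linarith) hm hm0,
    ← ENNReal.ofReal_min]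
  rw [← ENNReal.ofReal_sum_of_nonneg fun b _ =>
    le_min (bernoulliMass_nonneg (by norm_num) (by norm_num) b)
      (bernoulliMass_nonneg (by linarith) (by linarith) b)]
  exact ENNReal.ofReal_le_ofReal (seven_sixteenths_le_sum_min_bernoulliMass hε0 hε hn)

lemma mul_add_le_lintegral_add_lintegral {X : Type*} [MeasurableSpace X] {Q₀ Q₁ : Measure X}
    {ℓ₀ ℓ₁ : X → ℝ≥0∞} {A : Set X} (hA : MeasurableSet A) {K : ℝ≥0∞}
    (h₀ : ∀ ω ∈ A, K ≤ ℓ₀ ω) (h₁ : ∀ ω ∈ Aᶜ, K ≤ ℓ₁ ω) :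
    K * (Q₀ A + Q₁ Aᶜ) ≤ ∫⁻ ω, ℓ₀ ω ∂Q₀ + ∫⁻ ω, ℓ₁ ω ∂Q₁ := by
  rw [mul_add, ← setLIntegral_const, ← setLIntegral_const]
  exact add_le_add ((setLIntegral_mono' hA h₀).trans (setLIntegral_le_lintegral _ _))
    ((setLIntegral_mono' hA.compl h₁).trans (setLIntegral_le_lintegral _ _))

/-- The risk `E[OT_p(est(μ₁, …, μₙ), E(P))^p]`; here `P.join` is `E(P)`. -/
def otRisk (p : ℝ) {n : ℕ} (est : (Fin n → Measure E2) → Measure E2)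
    (P : Measure (Measure E2)) [SigmaFinite P] : ℝ≥0∞ :=
  ∫⁻ ω, OTpow p (est ω) P.join ∂(Measure.pi fun _ : Fin n => P)

lemma ofReal_le_otRisk_add_otRisk {p r a ε : ℝ} {x : E2} {n : ℕ} (hp : 0 ≤ p) (hr : 0 < r)
    (hball : Metric.ball x r ⊆ Omega)
    (hfar : ∀ z ∈ Metric.ball x r, ∀ w ∈ OmegaBar \ Omega, r ≤ dist z w)
    (ha : 0 < a) (hε0 : 0 ≤ ε) (hε : ε ≤ 1 / 4) (hn : n * ε ^ 2 ≤ 1 / 16)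
    {est : (Fin n → Measure E2) → Measure E2} (hest : Measurable est) :
    ENNReal.ofReal (r ^ p * (ε * a / 2) * (7 / 16)) ≤
      otRisk p est (twoPointLaw (ENNReal.ofReal a • Measure.dirac x) (1 / 2)) +
        otRisk p est (twoPointLaw (ENNReal.ofReal a • Measure.dirac x) (1 / 2 + ε)) := by
  set m := ENNReal.ofReal a • Measure.dirac x
  set B := Metric.ball x r
  have hm0 : m ≠ 0 := by simpa [m] using ha
  have hjoin : ∀ θ : ℝ, 0 ≤ θ →
      (twoPointLaw m θ).join = ENNReal.ofReal (θ * a) • Measure.dirac x := fun θ hθ => by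
    rw [join_twoPointLaw, smul_smul, ← ENNReal.ofReal_mul hθ]
  -- the test: guess `P_{1/2 + ε}` when `est ω` puts more than the midpoint mass on `B`
  set A := {ω | ENNReal.ofReal ((1 / 2 + ε / 2) * a) ≤ est ω B}
  have hA : MeasurableSet A :=
    (Measure.measurable_coe Metric.isOpen_ball.measurableSet).comp hest measurableSet_Ici
  set K := ENNReal.ofReal (r ^ p) * ENNReal.ofReal (ε * a / 2)
  have hsplit : ∀ u : ℝ, 0 ≤ u → ENNReal.ofReal (u * a) + ENNReal.ofReal (ε * a / 2) =
      ENNReal.ofReal ((u + ε / 2) * a) := fun u hu => by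
    rw [← ENNReal.ofReal_add (by positivity) (by positivity)]; ring_nf
  have h₀ : ∀ ω ∈ A, K ≤ OTpow p (est ω) (twoPointLaw m (1 / 2)).join := fun ω hω => by
    rw [hjoin _ (by norm_num)]
    refine le_trans (mul_le_mul_right ?_ _)
      (ofReal_rpow_mul_excess_le_OTpow (est ω) _ hp hr hball hfar)
    exact ENNReal.le_sub_of_add_le_left ENNReal.ofReal_ne_top
      ((hsplit (1 / 2) (by norm_num)).trans_le hω)
  have h₁ : ∀ ω ∈ Aᶜ, K ≤ OTpow p (est ω) (twoPointLaw m (1 / 2 + ε)).join := fun ω hω => by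
    have hlt : est ω B < ENNReal.ofReal ((1 / 2 + ε / 2) * a) := not_le.1 hω
    rw [hjoin _ (by linarith)]
    refine le_trans (mul_le_mul_right ?_ _)
      (ofReal_rpow_mul_deficit_le_OTpow (est ω) _ hp hr hball)
    refine ENNReal.le_sub_of_add_le_right hlt.ne_top ?_
    rw [add_comm]
    calc est ω B + ENNReal.ofReal (ε * a / 2)
        ≤ ENNReal.ofReal ((1 / 2 + ε / 2) * a) + ENNReal.ofReal (ε * a / 2) := by gcongr
      _ = _ := by rw [hsplit (1 / 2 + ε / 2) (by linarith)]; ring_nf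
  calc ENNReal.ofReal (r ^ p * (ε * a / 2) * (7 / 16)) = K * ENNReal.ofReal (7 / 16) := by
        rw [ENNReal.ofReal_mul (by positivity), ENNReal.ofReal_mul (by positivity)]
    _ ≤ K * (Measure.pi (fun _ : Fin n => twoPointLaw m (1 / 2)) A +
          Measure.pi (fun _ : Fin n => twoPointLaw m (1 / 2 + ε)) Aᶜ) :=
        mul_le_mul_right (ofReal_seven_sixteenths_le_pi_twoPointLaw_add_compl
          (measurableSet_singleton_smul_dirac x _) hm0 hε0 hε hn A) K
    _ ≤ _ := mul_add_le_lintegral_add_lintegral hA h₀ h₁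

lemma memMq_zero (q L M : ℝ) : MemMq q L M 0 :=
  ⟨rfl, rfl, by simp [Pers]⟩

lemma memMq_smul_dirac_centerA (q : ℝ) {L M : ℝ} (hL : 0 < L) (hM : 0 ≤ M) :
    MemMq q L M (ENNReal.ofReal (M / (L / 2) ^ q) • Measure.dirac (centerA L)) := by
  classical
  have hLq : 0 < (L / 2) ^ q := by positivity
  refine ⟨?_, ?_, le_of_eq ?_⟩
  · simp [Measure.dirac_apply' _ measurableSet_Omega.compl, centerA_mem_Omega hL]
  · simp [Measure.dirac_apply' _ (measurableSet_ballA L).compl, centerA_mem_ballA hL.le]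
  · rw [Pers, Measure.restrict_smul, lintegral_smul_measure,
      setLIntegral_dirac' (continuous_dDiag.measurable.pow_const q).ennreal_ofReal
        measurableSet_Omega, if_pos (centerA_mem_Omega hL),
      dDiag_centerA hL.le, smul_eq_mul, ← ENNReal.ofReal_mul (by positivity),
      div_mul_cancel₀ _ hLq.ne']

lemma two_mul_minimax_constant_eq {p q L M : ℝ} (hL : 0 < L) {n : ℕ} (hn : 1 ≤ n) :
    2 * (7 * 2 ^ q / (256 * 4 ^ p) * M * L ^ (p - q) * (n : ℝ) ^ (-(1 : ℝ) / 2)) =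
      (L / 4) ^ p * (1 / (4 * Real.sqrt n) * (M / (L / 2) ^ q) / 2) * (7 / 16) := by
  have hsn : 0 < Real.sqrt n := Real.sqrt_pos.2 (by exact_mod_cast hn)
  rw [Real.div_rpow hL.le (by norm_num), Real.div_rpow hL.le (by norm_num),
    Real.rpow_sub hL, show -(1 : ℝ) / 2 = -(1 / 2) by ring,
    Real.rpow_neg (Nat.cast_nonneg n), ← Real.sqrt_eq_rpow]
  field_simp
  ring

theorem statement1_general (p q : ℝ) (hp : 1 ≤ p) :
    ∃ c : ℝ, 0 < c ∧
      ∀ (L M : ℝ), 0 < L → 0 < M → ∀ n : ℕ, 1 ≤ n →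
        ∀ est : (Fin n → Measure E2) → Measure E2, Measurable est →
          ENNReal.ofReal (c * M * L ^ (p - q) * (n : ℝ) ^ (-(1 : ℝ)/2)) ≤
            ⨆ (P : Measure (Measure E2)) (hP : IsProbabilityMeasure P)
                (_ : ∀ᵐ μ ∂P, MemMq q L M μ),
              haveI := hP
              ∫⁻ ω, OTpow p (est ω) P.join ∂(Measure.pi fun _ : Fin n => P) := by
  refine ⟨7 * 2 ^ q / (256 * 4 ^ p), by positivity, fun L M hL hM n hn est hest => ?_⟩
  set m := ENNReal.ofReal (M / (L / 2) ^ q) • Measure.dirac (centerA L)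
  have hmem : ∀ θ, ∀ᵐ μ ∂twoPointLaw m θ, MemMq q L M μ := fun θ =>
    ae_twoPointLaw (measurableSet_singleton_smul_dirac _ _) (memMq_smul_dirac_centerA q hL hM.le)
      (memMq_zero q L M)
  have hsn : 1 ≤ Real.sqrt n := Real.one_le_sqrt.2 (by exact_mod_cast hn)
  have hε : 1 / (4 * Real.sqrt n) ≤ 1 / 4 :=
    div_le_div_of_nonneg_left zero_le_one (by norm_num) (by linarith)
  have hnε : n * (1 / (4 * Real.sqrt n)) ^ 2 = 1 / 16 := by
    rw [div_pow, mul_pow, Real.sq_sqrt (Nat.cast_nonneg n)]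
    field_simp
    norm_num
  have hlow := ofReal_le_otRisk_add_otRisk (p := p) (r := L / 4) (a := M / (L / 2) ^ q)
    (by linarith) (by positivity) (ball_centerA_subset_Omega hL.le)
    (quarter_le_dist_of_mem_ball_centerA hL.le) (by positivity) (by positivity) hε hnε.le hest
  rw [← two_mul_minimax_constant_eq hL hn, ENNReal.ofReal_mul zero_le_two,
    ENNReal.ofReal_ofNat] at hlow
  refine (ENNReal.mul_le_mul_iff_right two_ne_zero ENNReal.ofNat_ne_top).1 ?_
  rw [two_mul (⨆ _, _)]
  exact hlow.trans (add_le_add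
    (le_iSup₂_of_le _ (isProbabilityMeasure_twoPointLaw m (by norm_num) (by norm_num))
      (le_iSup_of_le (hmem _) le_rfl))
    (le_iSup₂_of_le _ (isProbabilityMeasure_twoPointLaw m (by positivity) (by linarith))
      (le_iSup_of_le (hmem _) le_rfl)))

/-- Theorem: minimax lower bound over `P^q_{L,M}`.
For `1 ≤ p < ∞` and `q ≥ 0`, there is `c > 0` depending only on `p, q` such that for all
`L, M > 0`, `n ≥ 1` and every measurable estimator `μ̂_n`,
`sup_{P ∈ P^q_{L,M}} E[OT_p(μ̂_n, E(P))^p] ≥ c M L^{p-q} n^{-1/2}`. -/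
theorem statement1 (p q : ℝ) (hp : 1 ≤ p) (hq : 0 ≤ q) :
    ∃ c : ℝ, 0 < c ∧
      ∀ (L M : ℝ), 0 < L → 0 < M → ∀ n : ℕ, 1 ≤ n →
        ∀ est : (Fin n → Measure E2) → Measure E2, Measurable est →
          ENNReal.ofReal (c * M * L ^ (p - q) * (n : ℝ) ^ (-(1 : ℝ)/2)) ≤
            ⨆ (P : Measure (Measure E2)) (hP : IsProbabilityMeasure P)
                (_ : ∀ᵐ μ ∂P, MemMq q L M μ),
              haveI := hP
              ∫⁻ ω, OTpow p (est ω) P.join ∂(Measure.pi fun _ : Fin n => P) :=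
  statement1_general p q hp
end
end

section
/- Let 1 ≤ p < ∞, μ ∈ M^p, k ≥ 1, and let c = (c₁,…,c_k) ∈ Ω^k be a codebook. Define μ̂(c) := Σ_{j=1}^{k} μ(V_j(c))·δ_{c_j}. Then for every choice of nonnegative weights m₁,…,m_k and ν := Σ_{j=1}^{k} m_j·δ_{c_j}, one has OT_p(μ̂(c), μ) ≤ OT_p(ν, μ). -/
open MeasureTheory ENNReal Set

noncomputable section

lemma measurableSet_diagSet : MeasurableSet diagSet :=
  measurableSet_eq_fun (by fun_prop) (by fun_prop)

lemma measurableSet_OmegaBar : MeasurableSet OmegaBar :=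
  measurableSet_Omega.union measurableSet_diagSet

def diagProj (x : E2) : E2 := WithLp.toLp 2 (fun _ => (x 0 + x 1) / 2)

lemma continuous_diagProj : Continuous diagProj :=
  (PiLp.continuous_toLp 2 _).comp (continuous_pi fun _ => by fun_prop)

lemma diagProj_mem_diagSet (x : E2) : diagProj x ∈ diagSet := rfl

lemma diagProj_notMem_Omega (x : E2) : diagProj x ∉ Omega := lt_irrefl ((x 0 + x 1) / 2)

lemma dist_eq_sqrt_E2 (x y : E2) : dist x y = Real.sqrt ((x 0 - y 0) ^ 2 + (x 1 - y 1) ^ 2) := by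
  simp [EuclideanSpace.dist_eq, Fin.sum_univ_two, Real.dist_eq, sq_abs]

lemma dist_diagProj_le (x : E2) {y : E2} (hy : y ∈ diagSet) : dist x (diagProj x) ≤ dist x y := by
  have hy : y 0 = y 1 := hy
  rw [dist_eq_sqrt_E2, dist_eq_sqrt_E2, hy]
  refine Real.sqrt_le_sqrt ?_
  change (x 0 - (x 0 + x 1) / 2) ^ 2 + (x 1 - (x 0 + x 1) / 2) ^ 2 ≤ _
  nlinarith [sq_nonneg (x 0 + x 1 - 2 * y 1)]

lemma dDiag_eq_dist_diagProj (x : E2) : dDiag x = dist x (diagProj x) :=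
  le_antisymm (Metric.infDist_le_dist_of_mem (diagProj_mem_diagSet x))
    ((Metric.le_infDist ⟨_, diagProj_mem_diagSet x⟩).2 fun _ hy => dist_diagProj_le x hy)

section Codebook

variable {k : ℕ} {c : Fin k → E2}

/-- The point of `c_j` nearest to `x`, where the last index `j = k` stands for `∂Ω`. -/
def codePoint (k : ℕ) (c : Fin k → E2) (j : Fin (k+1)) (x : E2) : E2 :=
  if h : (j : ℕ) < k then c ⟨j, h⟩ else diagProj x

lemma dist_codePoint (j : Fin (k+1)) (x : E2) : dist x (codePoint k c j x) = cdistC k c j x := by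
  unfold codePoint cdistC
  split_ifs
  · rfl
  · exact (dDiag_eq_dist_diagProj x).symm

lemma continuous_codePoint (j : Fin (k+1)) : Continuous (codePoint k c j) := by
  unfold codePoint
  split_ifs
  · exact continuous_const
  · exact continuous_diagProj

lemma codePoint_castSucc (j : Fin k) (x : E2) : codePoint k c j.castSucc x = c j := by
  simp [codePoint, Fin.castSucc]

lemma codePoint_last (x : E2) : codePoint k c (Fin.last k) x = diagProj x := by
  simp [codePoint]

lemma codePoint_mem_OmegaBar (hc : ∀ j, c j ∈ OmegaBar) (j : Fin (k+1)) (x : E2) :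
    codePoint k c j x ∈ OmegaBar := by
  unfold codePoint
  split_ifs
  · exact hc _
  · exact Or.inr (diagProj_mem_diagSet x)

lemma continuous_cdistC (j : Fin (k+1)) : Continuous (cdistC k c j) := by
  have h : cdistC k c j = fun x => dist x (codePoint k c j x) :=
    funext fun x => (dist_codePoint j x).symm
  rw [h]
  exact continuous_id.dist (continuous_codePoint j)

lemma cdistC_nonneg (j : Fin (k+1)) (x : E2) : 0 ≤ cdistC k c j x :=
  dist_codePoint (c := c) j x ▸ dist_nonneg

lemma cdistC_castSucc (j : Fin k) (x : E2) : cdistC k c j.castSucc x = dist x (c j) := by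
  rw [← dist_codePoint, codePoint_castSucc]

lemma cdistC_last (x : E2) : cdistC k c (Fin.last k) x = dDiag x := by
  rw [← dist_codePoint, codePoint_last, dDiag_eq_dist_diagProj]

def codebookDist (k : ℕ) (c : Fin k → E2) (x : E2) : ℝ :=
  Finset.univ.inf' Finset.univ_nonempty fun j : Fin (k+1) => cdistC k c j x

lemma continuous_codebookDist : Continuous (codebookDist k c) :=
  Continuous.finset_inf'_apply _ fun j _ => continuous_cdistC j

lemma codebookDist_nonneg (x : E2) : 0 ≤ codebookDist k c x :=
  Finset.le_inf' _ _ fun j _ => cdistC_nonneg j x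

lemma codebookDist_le_dist {x y : E2} (hy : y ∈ range c ∪ diagSet) :
    codebookDist k c x ≤ dist y x := by
  rcases hy with ⟨j, rfl⟩ | hy
  · calc codebookDist k c x ≤ cdistC k c j.castSucc x := Finset.inf'_le _ (Finset.mem_univ _)
      _ = dist (c j) x := by rw [cdistC_castSucc, dist_comm]
  · calc codebookDist k c x ≤ cdistC k c (Fin.last k) x := Finset.inf'_le _ (Finset.mem_univ _)
      _ ≤ dist y x := by rw [cdistC_last, dist_comm]; exact Metric.infDist_le_dist_of_mem hy

lemma measurableSet_Vcell (j : Fin (k+1)) : MeasurableSet (Vcell k c j) := by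
  have h : Vcell k c j = Omega ∩
      ((⋂ (j' : Fin (k+1)) (_ : j' < j), {x | cdistC k c j x ≤ cdistC k c j' x}) ∩
       (⋂ (j' : Fin (k+1)) (_ : j < j'), {x | cdistC k c j x < cdistC k c j' x})) := by
    ext x
    simp only [Vcell, mem_ofPred_eq, mem_inter_iff, mem_iInter]
  rw [h]
  refine measurableSet_Omega.inter (.inter ?_ ?_) <;>
    refine .iInter fun j' => .iInter fun _ => ?_
  · exact measurableSet_le (continuous_cdistC j).measurable (continuous_cdistC j').measurable
  · exact measurableSet_lt (continuous_cdistC j).measurable (continuous_cdistC j').measurable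

lemma Vcell_subset_Omega (j : Fin (k+1)) : Vcell k c j ⊆ Omega := fun _ hx => hx.1

lemma pairwise_disjoint_Vcell : Pairwise (Function.onFun Disjoint (Vcell k c)) := by
  intro j j' hne
  rw [Function.onFun, Set.disjoint_left]
  rintro x ⟨_, hle, hlt⟩ ⟨_, hle', hlt'⟩
  rcases hne.lt_or_gt with h | h
  · exact (hle' j h).not_gt (hlt j' h)
  · exact (hlt' j h).not_ge (hle j' h)

lemma cdistC_le_of_mem_Vcell {j : Fin (k+1)} {x : E2} (hx : x ∈ Vcell k c j) (j' : Fin (k+1)) :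
    cdistC k c j x ≤ cdistC k c j' x := by
  rcases lt_trichotomy j' j with h | rfl | h
  · exact hx.2.1 j' h
  · exact le_rfl
  · exact (hx.2.2 j' h).le

lemma codebookDist_eq_of_mem_Vcell {j : Fin (k+1)} {x : E2} (hx : x ∈ Vcell k c j) :
    codebookDist k c x = cdistC k c j x :=
  le_antisymm (Finset.inf'_le _ (Finset.mem_univ j))
    (Finset.le_inf' _ _ fun j' _ => cdistC_le_of_mem_Vcell hx j')

/-- Ties are broken towards the largest index, as in the definition of `Vcell`. -/
lemma exists_mem_Vcell {x : E2} (hx : x ∈ Omega) : ∃ j, x ∈ Vcell k c j := by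
  classical
  set S := Finset.univ.filter fun j : Fin (k+1) => ∀ j', cdistC k c j x ≤ cdistC k c j' x
  have hS : S.Nonempty := by
    obtain ⟨j, -, hj⟩ := Finset.exists_min_image Finset.univ (fun j => cdistC k c j x)
      Finset.univ_nonempty
    exact ⟨j, Finset.mem_filter.2 ⟨Finset.mem_univ _, fun j' => hj j' (Finset.mem_univ _)⟩⟩
  have hmin := (Finset.mem_filter.1 (S.max'_mem hS)).2
  refine ⟨S.max' hS, hx, fun j' _ => hmin j', fun j' hj' => (hmin j').lt_of_ne fun heq => ?_⟩
  have hj'S : j' ∈ S := Finset.mem_filter.2 ⟨Finset.mem_univ _, fun j'' => heq ▸ hmin j''⟩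
  exact (S.le_max' j' hj'S).not_gt hj'

lemma iUnion_Vcell : ⋃ j, Vcell k c j = Omega :=
  (iUnion_subset Vcell_subset_Omega).antisymm fun _ hx =>
    mem_iUnion.2 (exists_mem_Vcell hx)

lemma restrict_Omega_eq_sum_Vcell (μ : Measure E2) :
    μ.restrict Omega = ∑ j, μ.restrict (Vcell k c j) := by
  rw [← iUnion_Vcell (c := c), Measure.restrict_iUnion pairwise_disjoint_Vcell measurableSet_Vcell,
    Measure.sum_fintype]

end Codebook

/-- `μ̂(c)`. -/
def voronoiMeasure (μ : Measure E2) (k : ℕ) (c : Fin k → E2) : Measure E2 :=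
  ∑ j : Fin k, μ (Vcell k c j.castSucc) • Measure.dirac (c j)

/-- `R_{k,p}(c)^p`: `distortion p μ k c = voronoiCost p μ k c ^ (1/p)`. -/
def voronoiCost (p : ℝ) (μ : Measure E2) (k : ℕ) (c : Fin k → E2) : ℝ≥0∞ :=
  ∑ j : Fin (k+1), ∫⁻ x in Vcell k c j, ENNReal.ofReal (cdistC k c j x ^ p) ∂μ

def voronoiPlan (μ : Measure E2) (k : ℕ) (c : Fin k → E2) : Measure (E2 × E2) :=
  ∑ j : Fin (k+1), (μ.restrict (Vcell k c j)).map fun x => (codePoint k c j x, x)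

section Plan

variable (p : ℝ) (μ : Measure E2) {k : ℕ} (c : Fin k → E2)

lemma measurable_codePoint_prodMk (j : Fin (k+1)) :
    Measurable fun x => (codePoint k c j x, x) :=
  (continuous_codePoint j).measurable.prodMk measurable_id

lemma voronoiCost_eq_setLIntegral_codebookDist :
    voronoiCost p μ k c = ∫⁻ x in Omega, ENNReal.ofReal (codebookDist k c x ^ p) ∂μ := by
  rw [restrict_Omega_eq_sum_Vcell, lintegral_finsetSum_measure]
  refine Finset.sum_congr rfl fun j _ => setLIntegral_congr_fun (measurableSet_Vcell j) ?_
  intro x hx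
  simp only [codebookDist_eq_of_mem_Vcell hx]

lemma voronoiPlan_map_snd : (voronoiPlan μ k c).map Prod.snd = μ.restrict Omega := by
  rw [voronoiPlan, Measure.map_finset_sum' measurable_snd.aemeasurable, restrict_Omega_eq_sum_Vcell]
  refine Finset.sum_congr rfl fun j _ => ?_
  rw [Measure.map_map measurable_snd (measurable_codePoint_prodMk c j)]
  exact Measure.map_id

lemma voronoiPlan_map_fst_restrict :
    ((voronoiPlan μ k c).map Prod.fst).restrict Omega = (voronoiMeasure μ k c).restrict Omega := by
  have hcell (j : Fin k) :
      ((μ.restrict (Vcell k c j.castSucc)).map fun x => (codePoint k c j.castSucc x, x)).map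
        Prod.fst = μ (Vcell k c j.castSucc) • Measure.dirac (c j) := by
    rw [Measure.map_map measurable_fst (measurable_codePoint_prodMk c _)]
    simp only [Function.comp_def, codePoint_castSucc, Measure.map_const,
      Measure.restrict_apply_univ]
  have hdiag : (((μ.restrict (Vcell k c (Fin.last k))).map fun x =>
      (codePoint k c (Fin.last k) x, x)).map Prod.fst).restrict Omega = 0 := by
    rw [Measure.map_map measurable_fst (measurable_codePoint_prodMk c _), Measure.restrict_eq_zero,
      Measure.map_apply (measurable_fst.comp (measurable_codePoint_prodMk c _)) measurableSet_Omega]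
    convert measure_empty (μ := μ.restrict (Vcell k c (Fin.last k)))
    ext x
    simp [codePoint_last, diagProj_notMem_Omega]
  rw [voronoiPlan, Measure.map_finset_sum' measurable_fst.aemeasurable, Fin.sum_univ_castSucc,
    Measure.restrict_add, hdiag, add_zero]
  simp only [hcell, voronoiMeasure]

lemma voronoiPlan_compl_null (hc : ∀ j, c j ∈ OmegaBar) :
    voronoiPlan μ k c (OmegaBar ×ˢ OmegaBar)ᶜ = 0 := by
  have hmeas : MeasurableSet (OmegaBar ×ˢ OmegaBar)ᶜ :=
    (measurableSet_OmegaBar.prod measurableSet_OmegaBar).compl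
  simp only [voronoiPlan, Measure.finsetSum_apply]
  refine Finset.sum_eq_zero fun j _ => ?_
  rw [Measure.map_apply (measurable_codePoint_prodMk c j) hmeas,
    Measure.restrict_apply (hmeas.preimage (measurable_codePoint_prodMk c j))]
  refine measure_mono_null (fun x ⟨hx, hxV⟩ => hx ?_) measure_empty
  exact ⟨codePoint_mem_OmegaBar hc j x, Or.inl (Vcell_subset_Omega j hxV)⟩

lemma voronoiPlan_mem_Adm (hc : ∀ j, c j ∈ OmegaBar) :
    voronoiPlan μ k c ∈ Adm (voronoiMeasure μ k c) μ := by
  refine ⟨voronoiPlan_map_fst_restrict μ c, ?_, voronoiPlan_compl_null μ c hc⟩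
  rw [voronoiPlan_map_snd, Measure.restrict_restrict measurableSet_Omega, inter_self]

lemma lintegral_voronoiPlan :
    ∫⁻ z, ENNReal.ofReal (dist z.1 z.2 ^ p) ∂voronoiPlan μ k c = voronoiCost p μ k c := by
  have hcost : Measurable fun z : E2 × E2 => ENNReal.ofReal (dist z.1 z.2 ^ p) :=
    ((continuous_fst.dist continuous_snd).measurable.pow_const p).ennreal_ofReal
  rw [voronoiPlan, lintegral_finsetSum_measure]
  refine Finset.sum_congr rfl fun j _ => ?_
  rw [lintegral_map hcost (measurable_codePoint_prodMk c j)]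
  simp_rw [dist_comm (codePoint k c j _), dist_codePoint]

lemma OTpow_voronoiMeasure_le (hc : ∀ j, c j ∈ OmegaBar) :
    OTpow p (voronoiMeasure μ k c) μ ≤ voronoiCost p μ k c :=
  (iInf₂_le _ (voronoiPlan_mem_Adm μ c hc)).trans_eq (lintegral_voronoiPlan p μ c)

end Plan

lemma ae_fst_mem_of_mem_Adm {ν μ : Measure E2} {π : Measure (E2 × E2)} {s : Set E2}
    (hν : ν (Omega \ s) = 0) (hπ : π ∈ Adm ν μ) : ∀ᵐ z ∂π, z.1 ∈ s ∪ diagSet := by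
  obtain ⟨hfst, -, hbar⟩ := hπ
  have hrestrict (ρ : Measure E2) : ρ.restrict Omega (Omega \ s) = ρ (Omega \ s) := by
    rw [Measure.restrict_apply' measurableSet_Omega, inter_eq_left.2 sdiff_subset]
  have hout : π (Prod.fst ⁻¹' (Omega \ s)) = 0 := by
    refine nonpos_iff_eq_zero.1 ((Measure.le_map_apply measurable_fst.aemeasurable _).trans ?_)
    rw [← hrestrict, hfst, hrestrict, hν]
  filter_upwards [measure_eq_zero_iff_ae_notMem.1 hbar, measure_eq_zero_iff_ae_notMem.1 hout]
    with z hbar hout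
  rcases (not_not.1 hbar).1 with hΩ | hdiag
  · exact Or.inl (by_contra fun hs => hout ⟨hΩ, hs⟩)
  · exact Or.inr hdiag

lemma voronoiCost_le_OTpow {p : ℝ} (hp : 0 ≤ p) {μ ν : Measure E2} {k : ℕ} {c : Fin k → E2}
    (hν : ν (Omega \ range c) = 0) : voronoiCost p μ k c ≤ OTpow p ν μ := by
  rw [voronoiCost_eq_setLIntegral_codebookDist]
  refine le_iInf₂ fun π hπ => ?_
  have hmeas : Measurable fun x => ENNReal.ofReal (codebookDist k c x ^ p) :=
    (continuous_codebookDist.measurable.pow_const p).ennreal_ofReal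
  calc ∫⁻ x in Omega, ENNReal.ofReal (codebookDist k c x ^ p) ∂μ
      = ∫⁻ x in Omega, ENNReal.ofReal (codebookDist k c x ^ p) ∂π.map Prod.snd := by
        rw [hπ.2.1]
    _ ≤ ∫⁻ x, ENNReal.ofReal (codebookDist k c x ^ p) ∂π.map Prod.snd :=
        setLIntegral_le_lintegral _ _
    _ = ∫⁻ z, ENNReal.ofReal (codebookDist k c z.2 ^ p) ∂π := lintegral_map hmeas measurable_snd
    _ ≤ ∫⁻ z, ENNReal.ofReal (dist z.1 z.2 ^ p) ∂π := by
        refine lintegral_mono_ae ((ae_fst_mem_of_mem_Adm hν hπ).mono fun z hz => ?_)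
        exact ENNReal.ofReal_le_ofReal
          (Real.rpow_le_rpow (codebookDist_nonneg _) (codebookDist_le_dist hz) hp)

lemma sum_smul_dirac_apply_diff_range {k : ℕ} (c : Fin k → E2) (w : Fin k → ℝ≥0∞) (s : Set E2) :
    (∑ j, w j • Measure.dirac (c j)) (s \ range c) = 0 := by
  rw [Measure.finsetSum_apply]
  refine Finset.sum_eq_zero fun j _ => ?_
  rw [Measure.smul_apply, Measure.dirac_apply, indicator_of_notMem fun h => h.2 ⟨j, rfl⟩, smul_zero]

theorem statement4_general (p : ℝ) (hp : 1 ≤ p) (μ : Measure E2)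
    (k : ℕ) (c : Fin k → E2) (hc : ∀ j, c j ∈ Omega)
    (m : Fin k → ℝ) :
    OTp p (∑ j : Fin k, μ (Vcell k c j.castSucc) • Measure.dirac (c j)) μ ≤
      OTp p (∑ j : Fin k, ENNReal.ofReal (m j) • Measure.dirac (c j)) μ :=
  ENNReal.rpow_le_rpow
    ((OTpow_voronoiMeasure_le p μ c fun j => Or.inl (hc j)).trans
      (voronoiCost_le_OTpow (zero_le_one.trans hp) (sum_smul_dirac_apply_diff_range c _ _)))
    (by positivity)

/-- Lemma: optimality of the Voronoi weights.
For a codebook `c ∈ Ω^k`, the measure `μ̂(c) = Σ_j μ(V_j(c)) δ_{c_j}` satisfies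
`OT_p(μ̂(c), μ) ≤ OT_p(ν, μ)` for every `ν = Σ_j m_j δ_{c_j}` with nonnegative weights. -/
theorem statement4 (p : ℝ) (hp : 1 ≤ p) (μ : Measure E2)
    (hμΩ : μ Omegaᶜ = 0) (hμp : Pers p μ < ⊤)
    (k : ℕ) (hk : 1 ≤ k) (c : Fin k → E2) (hc : ∀ j, c j ∈ Omega)
    (m : Fin k → ℝ) (hm : ∀ j, 0 ≤ m j) :
    OTp p (∑ j : Fin k, μ (Vcell k c j.castSucc) • Measure.dirac (c j)) μ ≤
      OTp p (∑ j : Fin k, ENNReal.ofReal (m j) • Measure.dirac (c j)) μ :=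
  statement4_general p hp μ k c hc m

end
end
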